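/- As formal power series in q and t, ∑_{w ∈ B_n} q^{maj(w)} t^{des(w)} / ∏_{i=0}^{n} (1 − q^i t) = ∑_{k ≥ 0} ([k+1]_q + [k]_q)^n t^k, where [m]_q = 1 + q + … + q^{m−1}. -/

import Mathlib

/-- The group `B_n` of signed permutations of `[n]`, modelled as a pair of a permutation
of `Fin n` and a sign vector (`true` meaning a negative sign). -/
abbrev SignedPerm (n : ℕ) := Equiv.Perm (Fin n) × (Fin n → Bool)

/-- The one-line word of a signed permutation, as a function `ℕ → ℤ`, 1-indexed,
with the convention `w_0 = 0`. -/
def signedVal {n : ℕ} (w : SignedPerm n) : ℕ → ℤ := fun i =>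
  if h : i - 1 < n ∧ 1 ≤ i then
    (if w.2 ⟨i - 1, h.1⟩ then -(((w.1 ⟨i - 1, h.1⟩ : Fin n) : ℤ) + 1)
     else ((w.1 ⟨i - 1, h.1⟩ : Fin n) : ℤ) + 1)
  else 0

/-- The descent set `Des(w) = {i ∈ {0,…,n-1} : w_i > w_{i+1}}`, with `w_0 := 0`. -/
def signedDesSet {n : ℕ} (w : SignedPerm n) : Finset ℕ :=
  (Finset.range n).filter (fun i => signedVal w (i + 1) < signedVal w i)

/-- `maj(w) = ∑_{i ∈ Des(w)} i`. -/
def signedMaj {n : ℕ} (w : SignedPerm n) : ℕ := ∑ i ∈ signedDesSet w, i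

/-- The q-integer `[m]_q = 1 + q + … + q^{m-1}` in `ℚ(q)`. -/
noncomputable def qInt (m : ℕ) : RatFunc ℚ := ∑ i ∈ Finset.range m, RatFunc.X ^ i

/-! Inserting the letter `n + 1` or `-(n + 1)` into one of the `n + 1` slots of the words of
`B_n` produces every word of `B_{n+1}` exactly once. For `j < n`, label slot `j` by the number of
descents to its right, plus `j` if `j` is not a descent: the descents receive the labels
`0, …, des - 1` and the other slots `des, …, n - 1`. Inserting `-(n + 1)` resp. `n + 1` into a
slot with label `ℓ` raises `maj` by `ℓ` resp. `ℓ + 1`, and raises `des` by one exactly at the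
non-descents; the last slot multiplies `q^maj t^des` by `q^n t` resp. `1`. Summing the resulting
geometric series gives `(1 - q) S_{n+1}(t) = 2 (1 - q^{n+1} t) S_n(t) - (1 + q) (1 - t) S_n(qt)`.
Since `(1 - q) ([k+1]_q + [k]_q) = 2 - (1 + q) q^k` and
`(1 - q^{n+1} t) (t; q)_{n+1} = (1 - t) (qt; q)_{n+1}`, the series
`∑_k ([k+1]_q + [k]_q)^n t^k · (t; q)_{n+1}` obeys the same recurrence, and both equal `1` at
`n = 0`. -/

open Finset PowerSeries

namespace Finset

variable {α M : Type*} [LinearOrder α] [AddCommMonoid M]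

lemma sum_eq_sum_filter_lt_add_sum_filter_gt (s : Finset α) (f : α → M) (a : α) :
    ∑ i ∈ s, f i =
      ∑ i ∈ s with i < a, f i + (if a ∈ s then f a else 0) + ∑ i ∈ s with a < i, f i := by
  rw [sum_filter, sum_filter, ← sum_ite_eq' s a f, ← sum_add_distrib, ← sum_add_distrib]
  refine sum_congr rfl fun i _ => ?_
  rcases lt_trichotomy i a with h | rfl | h
  · simp [h, h.ne, h.not_gt]
  · simp
  · simp [h, h.ne', h.not_gt]

lemma sum_card_filter_lt (s : Finset α) (g : ℕ → M) :
    ∑ j ∈ s, g #{i ∈ s | i < j} = ∑ i ∈ range #s, g i := by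
  induction s using Finset.induction_on_max with
  | empty => simp
  | insert a s hlt ih =>
    have ha : a ∉ s := fun h => (hlt a h).false
    rw [sum_insert ha, card_insert_of_notMem ha, sum_range_succ, add_comm]
    congr 1
    · refine (sum_congr rfl fun j hj => ?_).trans ih
      rw [filter_insert, if_neg (hlt j hj).not_gt]
    · rw [filter_insert, if_neg (lt_irrefl a), filter_true_of_mem hlt]

lemma sum_card_filter_gt (s : Finset α) (g : ℕ → M) :
    ∑ j ∈ s, g #{i ∈ s | j < i} = ∑ i ∈ range #s, g i := by
  induction s using Finset.induction_on_min with
  | empty => simp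
  | insert a s hlt ih =>
    have ha : a ∉ s := fun h => (hlt a h).false
    rw [sum_insert ha, card_insert_of_notMem ha, sum_range_succ, add_comm]
    congr 1
    · refine (sum_congr rfl fun j hj => ?_).trans ih
      rw [filter_insert, if_neg (hlt j hj).not_gt]
    · rw [filter_insert, if_neg (lt_irrefl a), filter_true_of_mem hlt]

lemma add_card_filter_gt_eq_of_notMem {D : Finset ℕ} {n J : ℕ} (hJ : J ∈ range n \ D) :
    J + #{i ∈ D | J < i} = #D + #{i ∈ range n \ D | i < J} := by
  have hsplit := sum_eq_sum_filter_lt_add_sum_filter_gt D (fun _ => 1) J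
  have hJ' : J < n ∧ J ∉ D := by simpa using hJ
  have hcount : #{i ∈ D | i < J} + #{i ∈ range n \ D | i < J} = J := by
    rw [← card_union_of_disjoint (disjoint_filter_filter disjoint_sdiff_self_right)]
    convert card_range J using 2
    ext i
    by_cases hi : i ∈ D <;> simp [hi]; omega
  simp only [sum_const, smul_eq_mul, mul_one, if_neg hJ'.2, add_zero] at hsplit
  omega

lemma sum_range_slot_labels {D : Finset ℕ} {n : ℕ} (hD : D ⊆ range n) (f g : ℕ → M) :
    ∑ J ∈ range n, (if J ∈ D then f #{i ∈ D | J < i} else g (J + #{i ∈ D | J < i})) =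
      ∑ i ∈ range #D, f i + ∑ i ∈ Ico #D n, g i := by
  rw [sum_ite, filter_mem_eq_inter, inter_eq_right.mpr hD, filter_notMem_eq_sdiff,
    sum_card_filter_gt, sum_congr rfl fun J hJ => congrArg g (add_card_filter_gt_eq_of_notMem hJ),
    sum_card_filter_lt (range n \ D) (fun r => g (#D + r)), card_sdiff_of_subset hD, card_range,
    sum_Ico_eq_sum_range]

end Finset

namespace SignedPerm

variable {n : ℕ}

/-- Insert the letter `n + 1`, negated if `b`, into slot `j` of the one-line word of `u`
(so that it becomes the `(j + 1)`-st letter). -/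
def insertMax (u : SignedPerm n) (j : Fin (n + 1)) (b : Bool) : SignedPerm (n + 1) :=
  ((finSuccEquiv' j).trans (u.1.optionCongr.trans (finSuccEquiv' (Fin.last n)).symm),
    j.insertNth b u.2)

def entry (w : SignedPerm n) (k : Fin n) : ℤ :=
  if w.2 k then -((w.1 k : ℤ) + 1) else (w.1 k : ℤ) + 1

lemma abs_entry_le (w : SignedPerm n) (k : Fin n) : |entry w k| ≤ n := by
  have := (w.1 k).isLt
  unfold entry
  split_ifs <;> rw [abs_le] <;> constructor <;> omega

lemma signedVal_zero (w : SignedPerm n) : signedVal w 0 = 0 := by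
  simp [signedVal]

lemma signedVal_succ (w : SignedPerm n) (k : Fin n) : signedVal w (k + 1) = entry w k := by
  simp [signedVal, entry]

lemma signedVal_of_lt (w : SignedPerm n) {i : ℕ} (h : n < i) : signedVal w i = 0 :=
  dif_neg (by omega)

lemma abs_signedVal_le (w : SignedPerm n) (i : ℕ) : |signedVal w i| ≤ n := by
  rcases i with _ | k
  · simp [signedVal_zero]
  · by_cases hk : k < n
    · simpa [← signedVal_succ w ⟨k, hk⟩] using abs_entry_le w ⟨k, hk⟩
    · simp [signedVal_of_lt w (show n < k + 1 by omega)]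

lemma mem_signedDesSet {w : SignedPerm n} {i : ℕ} :
    i ∈ signedDesSet w ↔ i < n ∧ signedVal w (i + 1) < signedVal w i := by
  simp [signedDesSet]

lemma signedDesSet_subset_range (w : SignedPerm n) : signedDesSet w ⊆ range n :=
  filter_subset _ _

section Insertion

variable {M : Type*} [AddCommMonoid M] (u : SignedPerm n) (j : Fin (n + 1)) (b : Bool)

lemma entry_insertMax_self :
    entry (insertMax u j b) j = if b then -((n : ℤ) + 1) else (n : ℤ) + 1 := by
  simp [entry, insertMax]

lemma entry_insertMax_succAbove (k : Fin n) :
    entry (insertMax u j b) (j.succAbove k) = entry u k := by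
  simp [entry, insertMax]

lemma signedVal_insertMax_self :
    signedVal (insertMax u j b) (j + 1) = if b then -((n : ℤ) + 1) else (n : ℤ) + 1 := by
  rw [signedVal_succ, entry_insertMax_self]

lemma signedVal_insertMax_of_le {i : ℕ} (h : i ≤ j) :
    signedVal (insertMax u j b) i = signedVal u i := by
  rcases i with _ | k
  · simp [signedVal_zero]
  · have hk : k < n := by omega
    have hlt : Fin.castSucc ⟨k, hk⟩ < j := show k < (j : ℕ) by omega
    have := signedVal_succ (insertMax u j b) (j.succAbove ⟨k, hk⟩)
    rw [entry_insertMax_succAbove, Fin.succAbove_of_castSucc_lt _ _ hlt] at this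
    simpa [← signedVal_succ u ⟨k, hk⟩] using this

lemma signedVal_insertMax_of_lt {i : ℕ} (h : j < i) :
    signedVal (insertMax u j b) (i + 1) = signedVal u i := by
  obtain ⟨k, rfl⟩ : ∃ k, i = k + 1 := ⟨i - 1, by omega⟩
  by_cases hk : k < n
  · have hle : j ≤ Fin.castSucc ⟨k, hk⟩ := show (j : ℕ) ≤ k by omega
    have := signedVal_succ (insertMax u j b) (j.succAbove ⟨k, hk⟩)
    rw [entry_insertMax_succAbove, Fin.succAbove_of_le_castSucc _ _ hle] at this
    simpa [← signedVal_succ u ⟨k, hk⟩] using this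
  · rw [signedVal_of_lt _ (by omega), signedVal_of_lt _ (by omega)]

lemma signedDesSet_insertMax :
    signedDesSet (insertMax u j b) =
      ({i ∈ signedDesSet u | i < (j : ℕ)} ∪
          if b then {(j : ℕ)} else if (j : ℕ) < n then {(j : ℕ) + 1} else ∅) ∪
        {i ∈ signedDesSet u | (j : ℕ) < i}.map (addRightEmbedding 1) := by
  -- the new letter `±(n + 1)` exceeds every other letter, and `w_0 = 0`, in absolute value
  have hu := abs_signedVal_le u
  have hj := j.isLt
  ext i
  simp only [mem_union, mem_filter, mem_map, addRightEmbedding_apply, mem_signedDesSet]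
  rcases lt_trichotomy i (j : ℕ) with hi | rfl | hi
  · rw [signedVal_insertMax_of_le u j b hi, signedVal_insertMax_of_le u j b hi.le]
    cases b <;> split_ifs <;> simp <;> omega
  · rw [signedVal_insertMax_self, signedVal_insertMax_of_le u j b le_rfl]
    have := abs_le.mp (hu j)
    cases b <;> split_ifs <;> simp <;> omega
  · obtain ⟨k, rfl⟩ : ∃ k, i = k + 1 := ⟨i - 1, by omega⟩
    rw [signedVal_insertMax_of_lt u j b hi]
    rcases (Nat.lt_succ_iff.mp hi).eq_or_lt with rfl | hk
    · rw [signedVal_insertMax_self]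
      have := abs_le.mp (hu (j + 1))
      cases b <;> split_ifs <;> simp <;> omega
    · rw [signedVal_insertMax_of_lt u j b hk]
      cases b <;> split_ifs <;> simp <;> omega

lemma sum_signedDesSet_insertMax (f : ℕ → M) :
    ∑ i ∈ signedDesSet (insertMax u j b), f i =
      ∑ i ∈ signedDesSet u with i < (j : ℕ), f i +
        (if b then f j else if (j : ℕ) < n then f (j + 1) else 0) +
        ∑ i ∈ signedDesSet u with (j : ℕ) < i, f (i + 1) := by
  rw [signedDesSet_insertMax, sum_union, sum_union, sum_map]
  · congr 2
    split_ifs <;> simp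
  · rw [disjoint_left]
    intro i
    split_ifs <;> simp <;> omega
  · rw [disjoint_left]
    intro i
    split_ifs <;> simp +contextual <;> omega

lemma card_signedDesSet_insertMax_of_lt (hj : (j : ℕ) < n) :
    #(signedDesSet (insertMax u j b)) =
      #(signedDesSet u) + if (j : ℕ) ∈ signedDesSet u then 0 else 1 := by
  have hins := sum_signedDesSet_insertMax u j b fun _ => 1
  have hsplit := sum_eq_sum_filter_lt_add_sum_filter_gt (signedDesSet u) (fun _ => 1) (j : ℕ)
  simp only [sum_const, smul_eq_mul, mul_one, if_pos hj] at hins hsplit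
  split_ifs at hins hsplit ⊢ <;> omega

lemma signedMaj_insertMax_of_lt (hj : (j : ℕ) < n) :
    signedMaj (insertMax u j b) =
      signedMaj u + (if (j : ℕ) ∈ signedDesSet u then 0 else (j : ℕ)) +
        #{i ∈ signedDesSet u | (j : ℕ) < i} + if b then 0 else 1 := by
  have hins := sum_signedDesSet_insertMax u j b id
  have hsplit := sum_eq_sum_filter_lt_add_sum_filter_gt (signedDesSet u) id (j : ℕ)
  simp only [id, sum_add_distrib, sum_const, smul_eq_mul, mul_one, if_pos hj] at hins hsplit
  rw [signedMaj, signedMaj]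
  split_ifs at hins hsplit ⊢ <;> omega

lemma signedDesSet_insertMax_last :
    signedDesSet (insertMax u (Fin.last n) b) =
      if b then insert n (signedDesSet u) else signedDesSet u := by
  have hD (i : ℕ) (hi : i ∈ signedDesSet u) : i < n := (mem_signedDesSet.mp hi).1
  rw [signedDesSet_insertMax, Fin.val_last, filter_true_of_mem hD,
    filter_false_of_mem fun i hi => (hD i hi).not_gt]
  cases b <;> simp

lemma insertMax_fst_symm_last : (insertMax u j b).1.symm (Fin.last n) = j := by
  simp [insertMax, ← Equiv.optionCongr_symm]

end Insertion

lemma bijective_insertMax :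
    Function.Bijective fun p : SignedPerm n × Fin (n + 1) × Bool =>
      insertMax p.1 p.2.1 p.2.2 := by
  rw [Fintype.bijective_iff_injective_and_card]
  refine ⟨fun ⟨u, j, b⟩ ⟨u', j', b'⟩ h => ?_, ?_⟩
  · change insertMax u j b = insertMax u' j' b' at h
    obtain rfl : j = j' := by
      simpa only [insertMax_fst_symm_last] using congrArg (fun w => w.1.symm (Fin.last n)) h
    simp only [insertMax, Prod.mk.injEq, Fin.insertNth_inj] at h
    obtain ⟨hperm, rfl, hsign⟩ := h
    have : u.1 = u'.1 := Equiv.ext fun k => by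
      simpa [insertMax] using DFunLike.congr_fun hperm (j.succAbove k)
    simp [Prod.ext_iff, this, hsign]
  · simp [Fintype.card_perm, Nat.factorial_succ, pow_succ]
    ring

end SignedPerm

noncomputable section

lemma PowerSeries.rescale_C_mul_X_pow {R : Type*} [CommRing R] (a c : R) (d : ℕ) :
    rescale a (C c * X ^ d) = C (a ^ d) * (C c * X ^ d) := by
  ext k
  simp only [coeff_rescale, coeff_C_mul, coeff_X_pow]
  split_ifs with h
  · rw [h]
  · simp

section QSeries

variable {R : Type*} [CommRing R] (q : R)

def qPochhammer (n : ℕ) : R⟦X⟧ :=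
  ∏ i ∈ range n, (1 - C (q ^ i) * X)

def qOddPowSeries (n : ℕ) : R⟦X⟧ :=
  mk fun k => (∑ i ∈ range (k + 1), q ^ i + ∑ i ∈ range k, q ^ i) ^ n

lemma constantCoeff_qPochhammer (n : ℕ) : constantCoeff (qPochhammer q n) = 1 := by
  simp [qPochhammer]

lemma qPochhammer_one : qPochhammer q 1 = 1 - X := by
  simp [qPochhammer]

lemma qPochhammer_succ (n : ℕ) :
    qPochhammer q (n + 1) = (1 - C (q ^ n) * X) * qPochhammer q n := by
  rw [qPochhammer, prod_range_succ, mul_comm, qPochhammer]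

lemma qPochhammer_succ' (n : ℕ) :
    qPochhammer q (n + 1) = (1 - X) * rescale q (qPochhammer q n) := by
  rw [qPochhammer, prod_range_succ', qPochhammer, map_prod, mul_comm]
  congr 1
  · simp
  · refine prod_congr rfl fun i _ => ?_
    have := rescale_C_mul_X_pow q (q ^ i) 1
    simp only [pow_one] at this
    rw [map_sub, map_one, this, pow_succ, map_mul]
    ring

lemma qOddPowSeries_succ (n : ℕ) :
    C (1 - q) * qOddPowSeries q (n + 1) =
      2 * qOddPowSeries q n - C (1 + q) * rescale q (qOddPowSeries q n) := by
  ext k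
  have hk1 := geom_sum_mul_neg q (k + 1)
  have hk := geom_sum_mul_neg q k
  rw [← map_ofNat C 2, coeff_C_mul, map_sub, coeff_C_mul, coeff_C_mul, coeff_rescale,
    qOddPowSeries, qOddPowSeries, coeff_mk, coeff_mk, pow_succ]
  linear_combination (∑ i ∈ range (k + 1), q ^ i + ∑ i ∈ range k, q ^ i) ^ n * (hk1 + hk)

end QSeries

namespace SignedPerm

variable {R : Type*} [CommRing R] (q : R)

def majDesWeight {n : ℕ} (w : SignedPerm n) : R⟦X⟧ :=
  C (q ^ signedMaj w) * X ^ #(signedDesSet w)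

def majDesSeries (n : ℕ) : R⟦X⟧ :=
  ∑ w : SignedPerm n, majDesWeight q w

variable {n : ℕ} (u : SignedPerm n)

lemma sum_majDesWeight_insertMax_castSucc (k : Fin n) :
    ∑ b, majDesWeight q (insertMax u k.castSucc b) =
      C (1 + q) *
        (if (k : ℕ) ∈ signedDesSet u then C (q ^ #{i ∈ signedDesSet u | (k : ℕ) < i})
          else C (q ^ ((k : ℕ) + #{i ∈ signedDesSet u | (k : ℕ) < i})) * X) *
        majDesWeight q u := by
  have hk : ((k.castSucc : Fin (n + 1)) : ℕ) < n := k.isLt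
  simp only [Fintype.sum_bool, majDesWeight, card_signedDesSet_insertMax_of_lt _ _ _ hk,
    signedMaj_insertMax_of_lt _ _ _ hk, Fin.val_castSucc, Bool.false_eq_true, if_true, if_false]
  split_ifs <;> simp only [map_add, map_one, map_mul, map_pow, pow_add] <;> ring

lemma sum_majDesWeight_insertMax_last :
    ∑ b, majDesWeight q (insertMax u (Fin.last n) b) =
      (1 + C (q ^ n) * X) * majDesWeight q u := by
  have hn : n ∉ signedDesSet u := fun h => (mem_signedDesSet.mp h).1.false
  simp only [Fintype.sum_bool, majDesWeight, signedDesSet_insertMax_last, if_true, signedMaj,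
    sum_insert hn, card_insert_of_notMem hn]
  simp only [Bool.false_eq_true, if_false, map_pow, map_mul, pow_add, pow_succ]
  ring

lemma sum_majDesWeight_insertMax :
    ∑ j, ∑ b, majDesWeight q (insertMax u j b) =
      (C (1 + q) * (C (∑ i ∈ range #(signedDesSet u), q ^ i) +
          C (∑ i ∈ Ico #(signedDesSet u) n, q ^ i) * X) + 1 + C (q ^ n) * X) *
        majDesWeight q u := by
  simp only [Fin.sum_univ_castSucc, sum_majDesWeight_insertMax_castSucc,
    sum_majDesWeight_insertMax_last, ← sum_mul, ← mul_sum]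
  rw [Fin.sum_univ_eq_sum_range (fun J => if J ∈ signedDesSet u
      then C (q ^ #{i ∈ signedDesSet u | J < i})
      else C (q ^ (J + #{i ∈ signedDesSet u | J < i})) * X) n,
    sum_range_slot_labels (signedDesSet_subset_range u) (fun e => C (q ^ e))
      (fun e => C (q ^ e) * X),
    map_sum, map_sum, sum_mul]
  ring

lemma majDesSeries_succ :
    C (1 - q) * majDesSeries q (n + 1) =
      2 * (1 - C (q ^ (n + 1)) * X) * majDesSeries q n -
        C (1 + q) * (1 - X) * rescale q (majDesSeries q n) := by
  rw [majDesSeries, ← bijective_insertMax.sum_comp, Fintype.sum_prod_type, majDesSeries,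
    map_sum, mul_sum, mul_sum, mul_sum, ← sum_sub_distrib]
  refine sum_congr rfl fun u _ => ?_
  have hd : #(signedDesSet u) ≤ n := by simpa using card_le_card (signedDesSet_subset_range u)
  have hlow := congrArg C (geom_sum_mul_neg q #(signedDesSet u))
  have hhigh := congrArg C (geom_sum_Ico_mul_neg q hd)
  rw [Fintype.sum_prod_type, sum_majDesWeight_insertMax, majDesWeight, rescale_C_mul_X_pow]
  simp only [map_mul, map_sub, map_add, map_one, map_pow] at hlow hhigh ⊢
  linear_combination (C q + 1) * C q ^ signedMaj u * X ^ #(signedDesSet u) * (hlow + X * hhigh)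

lemma majDesSeries_zero : majDesSeries q 0 = 1 := by
  simp [majDesSeries, majDesWeight, signedMaj, signedDesSet]

theorem majDesSeries_eq_qOddPowSeries_mul_qPochhammer [IsDomain R] (hq : q ≠ 1) (n : ℕ) :
    majDesSeries q n = qOddPowSeries q n * qPochhammer q (n + 1) := by
  induction n with
  | zero =>
    rw [majDesSeries_zero, qPochhammer_one, qOddPowSeries]
    simp_rw [pow_zero]
    exact (mk_one_mul_one_sub_eq_one R).symm
  | succ n ih =>
    have hC : C (1 - q) ≠ 0 := (map_ne_zero_iff _ C_injective).mpr (sub_ne_zero.mpr hq.symm)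
    refine mul_left_cancel₀ hC ?_
    rw [majDesSeries_succ, ← mul_assoc, qOddPowSeries_succ, ih, map_mul]
    linear_combination (-2 * qOddPowSeries q n) * qPochhammer_succ q (n + 1) +
      (C (1 + q) * rescale q (qOddPowSeries q n)) * qPochhammer_succ' q (n + 1)

end SignedPerm

end

theorem typeB_carlitz_cube_general (n : ℕ) :
    (∑ w : SignedPerm n,
        PowerSeries.C (R := RatFunc ℚ) (RatFunc.X ^ signedMaj w)
          * (PowerSeries.X : PowerSeries (RatFunc ℚ)) ^ (signedDesSet w).card)
      * (∏ i ∈ Finset.range (n + 1),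
          (1 - PowerSeries.C (R := RatFunc ℚ) (RatFunc.X ^ i) * PowerSeries.X))⁻¹
      = PowerSeries.mk (fun k => (qInt (k + 1) + qInt k) ^ n) := by
  have hX : (RatFunc.X : RatFunc ℚ) ≠ 1 := fun h => by
    simpa [h] using RatFunc.intDegree_X (K := ℚ)
  change SignedPerm.majDesSeries RatFunc.X n * (qPochhammer RatFunc.X (n + 1))⁻¹ =
    qOddPowSeries RatFunc.X n
  rw [SignedPerm.majDesSeries_eq_qOddPowSeries_mul_qPochhammer _ hX, mul_assoc,
    PowerSeries.mul_inv_cancel _ (by simp [constantCoeff_qPochhammer]), mul_one]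

/-- As formal power series in `t` over `ℚ(q)`,
`∑_{w ∈ B_n} q^{maj w} t^{des w} / ∏_{i=0}^{n} (1 - q^i t) = ∑_{k≥0} ([k+1]_q + [k]_q)^n t^k`. -/
theorem typeB_carlitz_cube (n : ℕ) (hn : 0 < n) :
    (∑ w : SignedPerm n,
        PowerSeries.C (R := RatFunc ℚ) (RatFunc.X ^ signedMaj w)
          * (PowerSeries.X : PowerSeries (RatFunc ℚ)) ^ (signedDesSet w).card)
      * (∏ i ∈ Finset.range (n + 1),
          (1 - PowerSeries.C (R := RatFunc ℚ) (RatFunc.X ^ i) * PowerSeries.X))⁻¹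
      = PowerSeries.mk (fun k => (qInt (k + 1) + qInt k) ^ n) :=
  typeB_carlitz_cube_general n
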